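/- Let (X,d) be a starry metric space and let φ : (X,d) → (φ(X), d_φ) be a Ψ-quasisymmetric homeomorphism onto a metric space (φ(X), d_φ). Then the Assouad dimension of φ(X) is infinite; that is, for every α ≥ 0 and every C > 0 there exist a point x ∈ φ(X) and scales 0 < r < R such that the minimal number of sets of d_φ-diameter at most r needed to cover the closed ball B(x,R) exceeds C·(R/r)^α. -/
import Mathlib


open Metric Set

/-- A metric space contains an `(A,η)`-approximate `n`-star: there are a scale `ρ > 0` and
points `x 0, x 1, …, x n` such that `(A-η)ρ ≤ d(x i, x j) ≤ Aρ` for distinct `i,j ≥ 1` and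
`ρ ≤ d(x 0, x i) ≤ (1+η)ρ` for `i ≥ 1`. -/
def HasApproxStar (X : Type*) [PseudoMetricSpace X] (A η : ℝ) (n : ℕ) : Prop :=
  ∃ ρ : ℝ, 0 < ρ ∧ ∃ x : Fin (n + 1) → X,
    (∀ i j : Fin (n + 1), i ≠ 0 → j ≠ 0 → i ≠ j →
      (A - η) * ρ ≤ dist (x i) (x j) ∧ dist (x i) (x j) ≤ A * ρ) ∧
    (∀ i : Fin (n + 1), i ≠ 0 → ρ ≤ dist (x 0) (x i) ∧ dist (x 0) (x i) ≤ (1 + η) * ρ)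

/-- A metric space is starry if there are uniform `A > 1` and `0 < η < (A-1)/2` such that for
every `n` the space contains an `(Aₙ,η)`-approximate `n`-star for some `Aₙ ≥ A`. -/
def Starry (X : Type*) [PseudoMetricSpace X] : Prop :=
  ∃ A η : ℝ, 1 < A ∧ 0 < η ∧ η < (A - 1) / 2 ∧
    ∀ n : ℕ, ∃ An : ℝ, A ≤ An ∧ HasApproxStar X An η n

/-- `Ψ` is an increasing function `(0,∞) → (0,∞)`. -/
def IncreasingOnPos (Ψ : ℝ → ℝ) : Prop :=
  (∀ t : ℝ, 0 < t → 0 < Ψ t) ∧ StrictMonoOn Ψ (Set.Ioi 0)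

/-- A map `φ` is `Ψ`-quasisymmetric if for all triples of distinct points,
`d(φx,φy)/d(φx,φz) ≤ Ψ(d(x,y)/d(x,z))`. -/
def IsQuasisymmetric {X Y : Type*} [PseudoMetricSpace X] [PseudoMetricSpace Y]
    (φ : X → Y) (Ψ : ℝ → ℝ) : Prop :=
  ∀ x y z : X, x ≠ y → x ≠ z → y ≠ z →
    dist (φ x) (φ y) / dist (φ x) (φ z) ≤ Ψ (dist x y / dist x z)

set_option maxHeartbeats 1000000

/-- If `X` is a starry metric space and `φ : X → Y` is a `Ψ`-quasisymmetric
homeomorphism onto a metric space `Y = φ(X)`, then `Y` has infinite Assouad dimension: for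
every `α ≥ 0` and `C > 0` there are a point `y` and scales `0 < r < R` such that every cover
of the closed ball `B(y,R)` by finitely many sets of diameter at most `r` needs more than
`C·(R/r)^α` sets. -/
theorem starry_quasisymmetric_image_infinite_assouad
    {X Y : Type*} [MetricSpace X] [MetricSpace Y]
    (hX : Starry X) (φ : X ≃ₜ Y) (Ψ : ℝ → ℝ) (hΨ : IncreasingOnPos Ψ)
    (hqs : IsQuasisymmetric (φ : X → Y) Ψ) :
    ∀ α : ℝ, 0 ≤ α → ∀ C : ℝ, 0 < C →
      ∃ (y : Y) (r R : ℝ), 0 < r ∧ r < R ∧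
        ∀ 𝒰 : Finset (Set Y),
          (∀ U ∈ 𝒰, EMetric.diam U ≤ ENNReal.ofReal r) →
          closedBall y R ⊆ ⋃ U ∈ 𝒰, U →
          C * (R / r) ^ α < (𝒰.card : ℝ) := by
  obtain ⟨A, η, hA, hη, hηA, hstar⟩ := hX
  intro α hα C hC
  have hAη : 0 < A - η := by linarith
  have h1η : (0:ℝ) < 1 + η := by linarith
  set K := Ψ ((1 + η) / (A - η)) with hKdef
  set K₂ := Ψ (1 + η) with hK₂def
  have hK : 0 < K := hΨ.1 _ (by positivity)
  have hK₂ : 0 < K₂ := hΨ.1 _ h1η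
  set M := max (3 * K₂ ^ 2 * K) 2 with hMdef
  have hM2 : (2:ℝ) ≤ M := le_max_right _ _
  have hM3 : 3 * K₂ ^ 2 * K ≤ M := le_max_left _ _
  have hM : (0:ℝ) < M := by linarith
  set N := ⌈C * M ^ α⌉₊ + 2 with hNdef
  obtain ⟨An, hAn, ρ, hρ, x, hsep, hcen⟩ := hstar N
  have hmono : ∀ s t : ℝ, 0 < s → s ≤ t → Ψ s ≤ Ψ t := by
    intro s t hs hst
    rcases eq_or_lt_of_le hst with h | h
    · exact h ▸ le_rfl
    · exact (hΨ.2 (mem_Ioi.2 hs) (mem_Ioi.2 (hs.trans h)) h).le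
  have key : ∀ (a b c : X) (u : ℝ), a ≠ b → a ≠ c → b ≠ c → 0 < u →
      dist a b / dist a c ≤ u →
      dist (φ a) (φ b) ≤ Ψ u * dist (φ a) (φ c) := by
    intro a b c u hab hac hbc hu hle
    have hc : 0 < dist (φ a) (φ c) := dist_pos.2 fun h => hac (φ.injective h)
    have hab' : 0 < dist a b := dist_pos.2 hab
    have hac' : 0 < dist a c := dist_pos.2 hac
    have h2 : Ψ (dist a b / dist a c) ≤ Ψ u := hmono _ _ (by positivity) hle
    exact (div_le_iff₀ hc).1 ((hqs a b c hab hac hbc).trans h2)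
  have hne0 : ∀ i : Fin (N+1), i ≠ 0 → x 0 ≠ x i := by
    intro i hi
    exact dist_pos.1 (lt_of_lt_of_le hρ (hcen i hi).1)
  have hsep' : ∀ i j : Fin (N+1), i ≠ 0 → j ≠ 0 → i ≠ j →
      (A - η) * ρ ≤ dist (x i) (x j) := by
    intro i j hi hj hij
    have h := (hsep i j hi hj hij).1
    nlinarith [mul_nonneg (sub_nonneg.2 hAn) hρ.le]
  have hneij : ∀ i j : Fin (N+1), i ≠ 0 → j ≠ 0 → i ≠ j → x i ≠ x j := by
    intro i j hi hj hij
    exact dist_pos.1 (lt_of_lt_of_le (by positivity) (hsep' i j hi hj hij))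
  have hrc : ∀ i j : Fin (N+1), i ≠ 0 → j ≠ 0 →
      dist (x 0) (x i) / dist (x 0) (x j) ≤ 1 + η := by
    intro i j hi hj
    have h1 := (hcen i hi).2
    have h2 := (hcen j hj).1
    have hdj : 0 < dist (x 0) (x j) := lt_of_lt_of_le hρ h2
    rw [div_le_iff₀ hdj]
    nlinarith [h1, h2, h1η]
  have hra : ∀ i j : Fin (N+1), i ≠ 0 → j ≠ 0 → i ≠ j →
      dist (x i) (x 0) / dist (x i) (x j) ≤ (1 + η) / (A - η) := by
    intro i j hi hj hij
    have h1 : dist (x i) (x 0) ≤ (1 + η) * ρ := by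
      rw [dist_comm]; exact (hcen i hi).2
    have h2 := hsep' i j hi hj hij
    have hdij : 0 < dist (x i) (x j) := lt_of_lt_of_le (by positivity) h2
    rw [div_le_div_iff₀ hdij hAη]
    nlinarith [mul_le_mul_of_nonneg_right h1 hAη.le, mul_le_mul_of_nonneg_left h2 h1η.le]
  have hN2 : 2 ≤ N := by omega
  have h1lt : 1 < N + 1 := by omega
  have h2lt : 2 < N + 1 := by omega
  set i₁ : Fin (N+1) := ⟨1, h1lt⟩ with hi₁
  set i₂ : Fin (N+1) := ⟨2, h2lt⟩ with hi₂
  have h10 : i₁ ≠ 0 := by simp [hi₁, Fin.ext_iff]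
  have h20 : i₂ ≠ 0 := by simp [hi₂, Fin.ext_iff]
  have h12 : i₁ ≠ i₂ := by simp [hi₁, hi₂, Fin.ext_iff]
  set D := dist (φ (x 0)) (φ (x i₁)) with hDdef
  have hD : 0 < D := dist_pos.2 fun h => (hne0 i₁ h10) (φ.injective h)
  have hK₂1 : 1 ≤ K₂ := by
    have hx12 : x i₁ ≠ x i₂ := hneij _ _ h10 h20 h12
    have e1 : dist (φ (x 0)) (φ (x i₁)) ≤ K₂ * dist (φ (x 0)) (φ (x i₂)) :=
      key _ _ _ _ (hne0 i₁ h10) (hne0 i₂ h20) hx12 h1η (hrc i₁ i₂ h10 h20)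
    have e2 : dist (φ (x 0)) (φ (x i₂)) ≤ K₂ * dist (φ (x 0)) (φ (x i₁)) :=
      key _ _ _ _ (hne0 i₂ h20) (hne0 i₁ h10) hx12.symm h1η (hrc i₂ i₁ h20 h10)
    by_contra hlt
    push_neg at hlt
    have hd2 : D ≤ K₂ * (K₂ * D) := e1.trans (mul_le_mul_of_nonneg_left e2 hK₂.le)
    nlinarith [mul_pos hD (mul_pos (sub_pos.2 hlt) (by linarith : (0:ℝ) < 1 + K₂))]
  have hub : ∀ i : Fin (N+1), i ≠ 0 → dist (φ (x 0)) (φ (x i)) ≤ K₂ * D := by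
    intro i hi
    rcases eq_or_ne i i₁ with rfl | hne
    · nlinarith [hD, hK₂1]
    · exact key _ _ _ _ (hne0 i hi) (hne0 i₁ h10) (hneij i i₁ hi h10 hne) h1η
        (hrc i i₁ hi h10)
  have hlb : ∀ i : Fin (N+1), i ≠ 0 → D ≤ K₂ * dist (φ (x 0)) (φ (x i)) := by
    intro i hi
    rcases eq_or_ne i i₁ with rfl | hne
    · nlinarith [hD, hK₂1]
    · exact key _ _ _ _ (hne0 i₁ h10) (hne0 i hi) (hneij i₁ i h10 hi (Ne.symm hne)) h1η
        (hrc i₁ i h10 hi)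
  set R := K₂ * D with hRdef
  have hR : 0 < R := by positivity
  set r := R / M with hrdef
  have hr : 0 < r := by positivity
  have hrR : r < R := by
    rw [hrdef, div_lt_iff₀ hM]
    nlinarith [hR, hM2]
  have hsepY : ∀ i j : Fin (N+1), i ≠ 0 → j ≠ 0 → i ≠ j →
      r < dist (φ (x i)) (φ (x j)) := by
    intro i j hi hj hij
    have e1 : dist (φ (x i)) (φ (x 0)) ≤ K * dist (φ (x i)) (φ (x j)) :=
      key _ _ _ _ (Ne.symm (hne0 i hi)) (hneij i j hi hj hij) (hne0 j hj)
        (by positivity) (hra i j hi hj hij)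
    have e2 : D ≤ K₂ * dist (φ (x 0)) (φ (x i)) := hlb i hi
    rw [dist_comm (φ (x 0))] at e2
    have hs : 0 < dist (φ (x i)) (φ (x j)) :=
      dist_pos.2 fun h => (hneij i j hi hj hij) (φ.injective h)
    have hDle : D ≤ K₂ * (K * dist (φ (x i)) (φ (x j))) :=
      e2.trans (mul_le_mul_of_nonneg_left e1 hK₂.le)
    rw [hrdef, hRdef, div_lt_iff₀ hM]
    nlinarith [mul_le_mul_of_nonneg_left hDle hK₂.le,
      mul_le_mul_of_nonneg_right hM3 hs.le, hs, hK₂, hD]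
  refine ⟨φ (x 0), r, R, hr, hrR, ?_⟩
  intro 𝒰 hdiam hcov
  have hmem : ∀ k : Fin N, ∃ U ∈ 𝒰, φ (x k.succ) ∈ U := by
    intro k
    have hx : φ (x k.succ) ∈ closedBall (φ (x 0)) R := by
      rw [mem_closedBall, dist_comm]
      exact hub k.succ (Fin.succ_ne_zero k)
    simpa using hcov hx
  choose f hf𝒰 hfmem using hmem
  have hinj : Function.Injective f := by
    intro k l hkl
    by_contra hne
    have hks : k.succ ≠ l.succ := fun h => hne (Fin.succ_injective _ h)
    have hd := hsepY k.succ l.succ (Fin.succ_ne_zero k) (Fin.succ_ne_zero l) hks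
    have hedist : edist (φ (x k.succ)) (φ (x l.succ)) ≤ ENNReal.ofReal r :=
      le_trans (EMetric.edist_le_diam_of_mem (hfmem k) (hkl ▸ hfmem l)) (hdiam _ (hf𝒰 k))
    rw [edist_dist] at hedist
    have := (ENNReal.ofReal_le_ofReal_iff hr.le).1 hedist
    linarith
  have hcard : N ≤ 𝒰.card := by
    classical
    calc N = Fintype.card (Fin N) := (Fintype.card_fin N).symm
      _ ≤ Fintype.card {U // U ∈ 𝒰} :=
          Fintype.card_le_of_injective (fun k => ⟨f k, hf𝒰 k⟩)
            (fun k l h => hinj (congrArg Subtype.val h))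
      _ = 𝒰.card := Fintype.card_coe 𝒰
  have hR0 : R ≠ 0 := hR.ne'
  have hM0 : M ≠ 0 := hM.ne'
  have hRr : R / r = M := by
    rw [hrdef]
    field_simp
  have hceil : C * M ^ α ≤ (⌈C * M ^ α⌉₊ : ℝ) := Nat.le_ceil _
  have hNle : (N : ℝ) ≤ 𝒰.card := Nat.cast_le.2 hcard
  have hNval : (N : ℝ) = (⌈C * M ^ α⌉₊ : ℝ) + 2 := by rw [hNdef]; push_cast; ring
  rw [hRr]
  linarith
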